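/- Let D ⊆ ℝ^n be a nonzero closed convex cone and U ∈ ℝ^{p×n} with p ≥ 1. Set λ := max{ min_{y ∈ D ∩ S^{n−1}} ‖Uy‖, min_{z ∈ S^{p−1}} ‖Proj_D(Uᵀz)‖ }. Then λ · (UD ∩ B^p) ⊆ U(D ∩ B^n), where UD := { Uy : y ∈ D }, λ·S := { λ s : s ∈ S }, and B^k denotes the closed Euclidean unit ball in ℝ^k. -/
import Mathlib


open MeasureTheory ProbabilityTheory Metric Set
open scoped InnerProductSpace
open scoped Classical
open scoped Pointwise

noncomputable section

/-- Euclidean space `ℝ^k`. -/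
abbrev Euc (k : ℕ) : Type := EuclideanSpace ℝ (Fin k)

/-- The linear action of a matrix `A ∈ ℝ^{n×m}` on Euclidean space, `x ↦ Ax`. -/
def mulE {m n : ℕ} (A : Matrix (Fin n) (Fin m) ℝ) (x : Euc m) : Euc n :=
  Matrix.toEuclideanLin A x

/-- The metric projection onto a set `S`: the point of `S` closest to `y`
(if a unique closest point characterizing property holds; junk value `0` otherwise). -/
def metricProj {k : ℕ} (S : Set (Euc k)) (y : Euc k) : Euc k :=
  if h : ∃ z, z ∈ S ∧ ∀ w ∈ S, dist y z ≤ dist y w then h.choose else 0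

/-- `C` is a closed convex cone (containing the origin). -/
def IsClosedConvexCone {k : ℕ} (C : Set (Euc k)) : Prop :=
  IsClosed C ∧ Convex ℝ C ∧ (∀ c : ℝ, 0 ≤ c → ∀ x ∈ C, c • x ∈ C) ∧ (0 : Euc k) ∈ C

/-- The polar cone `S° = {z | ⟨x,z⟩ ≤ 0 ∀ x ∈ S}`. -/
def polarCone {k : ℕ} (S : Set (Euc k)) : Set (Euc k) :=
  {z | ∀ x ∈ S, ⟪x, z⟫_ℝ ≤ 0}

/-- The restricted norm `‖A‖_{C→D} = max_{x ∈ C ∩ S^{m-1}} ‖Proj_D (Ax)‖`. -/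
def resNorm {m n : ℕ} (C : Set (Euc m)) (D : Set (Euc n)) (A : Matrix (Fin n) (Fin m) ℝ) : ℝ :=
  sSup ((fun x => ‖metricProj D (mulE A x)‖) '' (C ∩ sphere 0 1))

/-- The restricted singular value `σ_{C→D}(A) = min_{x ∈ C ∩ S^{m-1}} ‖Proj_D (Ax)‖`. -/
def resSval {m n : ℕ} (C : Set (Euc m)) (D : Set (Euc n)) (A : Matrix (Fin n) (Fin m) ℝ) : ℝ :=
  sInf ((fun x => ‖metricProj D (mulE A x)‖) '' (C ∩ sphere 0 1))

/-- The restricted norm for arbitrary (not necessarily closed) cones: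
`‖B‖_{K→K'} = sup { ⟨Bx, y⟩ : x ∈ K ∩ B^ℓ, y ∈ K' ∩ B^p }`. -/
def resNormGen {l p : ℕ} (K : Set (Euc l)) (K' : Set (Euc p))
    (B : Matrix (Fin p) (Fin l) ℝ) : ℝ :=
  sSup (Set.image2 (fun x y => ⟪mulE B x, y⟫_ℝ) (K ∩ closedBall 0 1) (K' ∩ closedBall 0 1))

/-- The operator (spectral) norm of a matrix. -/
def opNorm {m n : ℕ} (A : Matrix (Fin n) (Fin m) ℝ) : ℝ :=
  ‖LinearMap.toContinuousLinearMap (Matrix.toEuclideanLin A)‖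

/-- The standard Gaussian measure on `ℝ^k` (i.i.d. N(0,1) coordinates). -/
def stdGaussianE (k : ℕ) : Measure (Euc k) :=
  Measure.map (⇑(EuclideanSpace.equiv (Fin k) ℝ).symm)
    (Measure.pi fun _ : Fin k => gaussianReal 0 1)

/-- The standard Gaussian measure on `n × m` arrays (i.i.d. N(0,1) entries). -/
def stdGaussianPi (n m : ℕ) : Measure (Fin n → Fin m → ℝ) :=
  Measure.pi fun _ : Fin n => Measure.pi fun _ : Fin m => gaussianReal 0 1

/-- The support function `h_K(x) = sup_{z ∈ K} ⟨x, z⟩`. -/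
def suppFn {k : ℕ} (K : Set (Euc k)) (x : Euc k) : ℝ := sSup ((fun z => ⟪x, z⟫_ℝ) '' K)

/-- The capped-angle cosine `cos d̄(X,Y) = max{⟨x,y⟩ : x ∈ X ∩ B, y ∈ Y ∩ B}`. -/
def cosAng {k : ℕ} (X Y : Set (Euc k)) : ℝ :=
  sSup (Set.image2 (fun x y => ⟪x, y⟫_ℝ) (X ∩ closedBall 0 1) (Y ∩ closedBall 0 1))

/-- `sin d̄(X,Y) = √(1 - cos d̄(X,Y)²)`. -/
def sinAng {k : ℕ} (X Y : Set (Euc k)) : ℝ := Real.sqrt (1 - cosAng X Y ^ 2)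

/-- The Kronecker (tensor) product `x ⊗ y ∈ ℝ^{mn}`. -/
def kron {m n : ℕ} (x : Euc m) (y : Euc n) : EuclideanSpace ℝ (Fin m × Fin n) :=
  (EuclideanSpace.equiv (Fin m × Fin n) ℝ).symm (fun p => x p.1 * y p.2)

/-- The primal feasible set `𝒫(C,D) = {A | ∃ x ∈ C \ {0}, Ax ∈ D°}`. -/
def primalSet {m n : ℕ} (C : Set (Euc m)) (D : Set (Euc n)) :
    Set (Matrix (Fin n) (Fin m) ℝ) :=
  {A | ∃ x ∈ C, x ≠ 0 ∧ mulE A x ∈ polarCone D}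

/-- The dual feasible set `𝒟(C,D) = {A | ∃ y ∈ D \ {0}, -Aᵀy ∈ C°}`. -/
def dualSet {m n : ℕ} (C : Set (Euc m)) (D : Set (Euc n)) :
    Set (Matrix (Fin n) (Fin m) ℝ) :=
  {A | ∃ y ∈ D, y ≠ 0 ∧ -(mulE A.transpose y) ∈ polarCone C}

/-- `K₂` is a `0`-contraction of `K₁`: there are generating sets `M₁` of `K₁`, `M₂` of `K₂`
(i.e. `Kᵢ` is the closed convex hull of `Mᵢ`) and a surjection `φ : M₁ → M₂` that is
`1`-Lipschitz and norm-nonincreasing. -/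
def IsZeroContractionOf {E₁ E₂ : Type*} [NormedAddCommGroup E₁] [NormedSpace ℝ E₁]
    [NormedAddCommGroup E₂] [NormedSpace ℝ E₂] (K₁ : Set E₁) (K₂ : Set E₂) : Prop :=
  ∃ (M₁ : Set E₁) (M₂ : Set E₂) (φ : E₁ → E₂),
    closure (convexHull ℝ M₁) = K₁ ∧ closure (convexHull ℝ M₂) = K₂ ∧
    φ '' M₁ = M₂ ∧
    (∀ x ∈ M₁, ∀ x' ∈ M₁, ‖φ x - φ x'‖ ≤ ‖x - x'‖) ∧
    (∀ x ∈ M₁, ‖φ x‖ ≤ ‖x‖)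

/-- The pair `(x, y)` regarded as an element of the Euclidean (ℓ²) product. -/
def pairL2 {m n : ℕ} (x : Euc m) (y : Euc n) : WithLp 2 (Euc m × Euc n) :=
  (WithLp.equiv 2 (Euc m × Euc n)).symm (x, y)

/-- The product `K × K'` as a subset of the Euclidean (ℓ²) product space. -/
def prodL2 {m n : ℕ} (K : Set (Euc m)) (K' : Set (Euc n)) : Set (WithLp 2 (Euc m × Euc n)) :=
  {q | ((WithLp.equiv 2 (Euc m × Euc n)) q).1 ∈ K ∧ ((WithLp.equiv 2 (Euc m × Euc n)) q).2 ∈ K'}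



lemma mulE_eq {m n : ℕ} (A : Matrix (Fin n) (Fin m) ℝ) :
    mulE A = ⇑(Matrix.toEuclideanLin A) := rfl

lemma mulE_zero {m n : ℕ} (A : Matrix (Fin n) (Fin m) ℝ) : mulE A 0 = 0 :=
  map_zero (Matrix.toEuclideanLin A)

lemma mulE_smul {m n : ℕ} (A : Matrix (Fin n) (Fin m) ℝ) (c : ℝ) (x : Euc m) :
    mulE A (c • x) = c • mulE A x := map_smul (Matrix.toEuclideanLin A) c x

lemma metricProj_spec {k : ℕ} {D : Set (Euc k)} (hcl : IsClosed D)
    (hconv : Convex ℝ D) (hne : D.Nonempty) (y : Euc k) :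
    metricProj D y ∈ D ∧ ∀ x ∈ D, ⟪y - metricProj D y, x - metricProj D y⟫_ℝ ≤ 0 := by
  have hex : ∃ z, z ∈ D ∧ ∀ w ∈ D, dist y z ≤ dist y w := by
    obtain ⟨v, hv, hmin⟩ := exists_norm_eq_iInf_of_complete_convex hne hcl.isComplete hconv y
    refine ⟨v, hv, fun w hw => ?_⟩
    have : Nonempty D := hne.to_subtype
    have hb : BddBelow (Set.range fun w : D => ‖y - (w : Euc k)‖) :=
      ⟨0, by rintro x ⟨u, rfl⟩; positivity⟩
    have h1 : (⨅ w : D, ‖y - w‖) ≤ ‖y - w‖ := ciInf_le hb ⟨w, hw⟩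
    simpa [dist_eq_norm, hmin] using h1
  rw [metricProj, dif_pos hex]
  obtain ⟨hmem, hmin⟩ := hex.choose_spec
  refine ⟨hmem, ?_⟩
  rw [← norm_eq_iInf_iff_real_inner_le_zero hconv hmem]
  have : Nonempty D := hne.to_subtype
  have hb : BddBelow (Set.range fun w : D => ‖y - (w : Euc k)‖) :=
    ⟨0, by rintro x ⟨u, rfl⟩; positivity⟩
  refine le_antisymm (le_ciInf fun w => ?_) (ciInf_le hb ⟨_, hmem⟩)
  simpa [dist_eq_norm] using hmin w w.2

lemma metricProj_cone_exists {k : ℕ} {D : Set (Euc k)} (hD : IsClosedConvexCone D)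
    (y : Euc k) : ∃ x ∈ D ∩ closedBall (0 : Euc k) 1, ⟪y, x⟫_ℝ = ‖metricProj D y‖ := by
  obtain ⟨hcl, hconv, hcone, h0⟩ := hD
  obtain ⟨hmem, hVI⟩ := metricProj_spec hcl hconv ⟨0, h0⟩ y
  set q := metricProj D y with hq
  have horth : ⟪y - q, q⟫_ℝ = 0 := by
    have h1 := hVI 0 h0
    have h2 := hVI ((2:ℝ) • q) (hcone 2 (by norm_num) q hmem)
    have e2 : (2:ℝ) • q - q = q := by rw [two_smul]; abel
    rw [e2] at h2
    simp only [zero_sub, inner_neg_right] at h1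
    linarith
  by_cases hq0 : q = 0
  · exact ⟨0, ⟨h0, by simp⟩, by simp [hq0]⟩
  · refine ⟨‖q‖⁻¹ • q, ⟨hcone _ (by positivity) q hmem, ?_⟩, ?_⟩
    · simp [mem_closedBall, dist_eq_norm, norm_smul, abs_of_nonneg,
        inv_mul_cancel₀ (norm_ne_zero_iff.2 hq0)]
    · have hyq : ⟪y, q⟫_ℝ = ‖q‖ ^ 2 := by
        have := horth
        rw [inner_sub_left, real_inner_self_eq_norm_sq] at this
        linarith
      rw [real_inner_smul_right, hyq, sq]
      field_simp

lemma inner_mulE {p n : ℕ} (U : Matrix (Fin p) (Fin n) ℝ) (x : Euc n) (z : Euc p) :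
    ⟪mulE U x, z⟫_ℝ = ⟪x, mulE U.transpose z⟫_ℝ := by
  have hT : U.transpose = U.conjTranspose := by
    ext i j; simp [Matrix.conjTranspose_apply]
  rw [mulE, mulE, hT, Matrix.toEuclideanLin_conjTranspose_eq_adjoint,
    LinearMap.adjoint_inner_right]


/-- For a nonzero closed convex cone `D ⊆ ℝ^n` and `U ∈ ℝ^{p×n}`, with
`λ = max{min_{y ∈ D ∩ S^{n−1}} ‖Uy‖, min_{z ∈ S^{p−1}} ‖Proj_D(Uᵀz)‖}`:
`λ • (UD ∩ B^p) ⊆ U(D ∩ B^n)`. -/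
theorem statement15 {n p : ℕ} (hp : 1 ≤ p) (D : Set (Euc n))
    (hD : IsClosedConvexCone D) (hDne : D ≠ {0})
    (U : Matrix (Fin p) (Fin n) ℝ) :
    (max (sInf ((fun y => ‖mulE U y‖) '' (D ∩ sphere (0 : Euc n) 1)))
         (sInf ((fun z => ‖metricProj D (mulE U.transpose z)‖) '' sphere (0 : Euc p) 1)))
        • ((mulE U '' D) ∩ closedBall 0 1)
      ⊆ mulE U '' (D ∩ closedBall 0 1) := by
  obtain ⟨hDcl, hDconv, hDcone, hD0⟩ := hD
  set a := sInf ((fun y => ‖mulE U y‖) '' (D ∩ sphere (0 : Euc n) 1)) with ha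
  set b := sInf ((fun z => ‖metricProj D (mulE U.transpose z)‖) '' sphere (0 : Euc p) 1) with hb
  obtain ⟨d, hdD, hd0⟩ : ∃ d ∈ D, d ≠ 0 := by
    by_contra h
    push_neg at h
    exact hDne (Set.eq_singleton_iff_unique_mem.2 ⟨hD0, fun x hx => h x hx⟩)
  have hDsph : (D ∩ sphere (0 : Euc n) 1).Nonempty :=
    ⟨‖d‖⁻¹ • d, hDcone _ (by positivity) d hdD, by
      simp [mem_sphere_iff_norm, norm_smul, inv_mul_cancel₀ (norm_ne_zero_iff.2 hd0)]⟩
  have ha0 : 0 ≤ a := le_csInf (hDsph.image _) (by rintro r ⟨x, -, rfl⟩; positivity)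
  have hsphp : (sphere (0 : Euc p) 1).Nonempty := by
    refine ⟨EuclideanSpace.single (⟨0, hp⟩ : Fin p) (1 : ℝ), ?_⟩
    simp [mem_sphere_iff_norm, EuclideanSpace.norm_single]
  have hb0 : 0 ≤ b := le_csInf (hsphp.image _) (by rintro r ⟨x, -, rfl⟩; positivity)
  set lam := max a b with hlam
  have hlam0 : 0 ≤ lam := le_trans ha0 (le_max_left _ _)
  intro w hw
  obtain ⟨w0, hw0, rfl⟩ := Set.mem_smul_set.mp hw
  obtain ⟨⟨y, hyD, rfl⟩, hwb⟩ := hw0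
  have hUy : ‖mulE U y‖ ≤ 1 := by simpa [mem_closedBall, dist_eq_norm] using hwb
  rcases le_or_gt b a with hab | hab
  · -- λ = a, elementary argument
    have hlama : lam = a := max_eq_left hab
    by_cases hy0 : mulE U y = 0
    · exact ⟨0, ⟨hD0, by simp⟩, by rw [hy0, smul_zero, mulE_zero]⟩
    · have hyne : y ≠ 0 := by rintro rfl; exact hy0 (mulE_zero U)
      have hyn : (0 : ℝ) < ‖y‖ := norm_pos_iff.2 hyne
      have hmem : ‖y‖⁻¹ • y ∈ D ∩ sphere (0 : Euc n) 1 :=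
        ⟨hDcone _ (by positivity) y hyD, by
          simp [mem_sphere_iff_norm, norm_smul, inv_mul_cancel₀ hyn.ne']⟩
      have h1 : a ≤ ‖mulE U (‖y‖⁻¹ • y)‖ :=
        csInf_le ⟨0, by rintro r ⟨x, -, rfl⟩; positivity⟩ ⟨_, hmem, rfl⟩
      have h2 : ‖mulE U (‖y‖⁻¹ • y)‖ = ‖y‖⁻¹ * ‖mulE U y‖ := by
        rw [mulE_smul, norm_smul, Real.norm_eq_abs, abs_of_nonneg (by positivity)]
      have hay : a * ‖y‖ ≤ 1 := by
        have := h1.trans_eq h2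
        have h3 : a * ‖y‖ ≤ ‖mulE U y‖ := by
          rw [← inv_mul_cancel₀ hyn.ne', mul_comm a ‖y‖] at *
          calc ‖y‖ * a ≤ ‖y‖ * (‖y‖⁻¹ * ‖mulE U y‖) :=
                mul_le_mul_of_nonneg_left this hyn.le
            _ = (‖y‖ * ‖y‖⁻¹) * ‖mulE U y‖ := by ring
            _ = ‖mulE U y‖ := by rw [mul_inv_cancel₀ hyn.ne', one_mul]
        exact h3.trans hUy
      refine ⟨lam • y, ⟨hDcone _ hlam0 y hyD, ?_⟩, by rw [mulE_smul]⟩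
      rw [mem_closedBall, dist_zero_right, norm_smul, Real.norm_eq_abs,
        abs_of_nonneg hlam0, hlama]
      exact hay
  · -- λ = b, separation argument
    have hlamb : lam = b := max_eq_right hab.le
    by_contra hcon
    have hKconv : Convex ℝ (mulE U '' (D ∩ closedBall 0 1)) := by
      rw [mulE_eq]
      exact (hDconv.inter (convex_closedBall _ _)).linear_image (Matrix.toEuclideanLin U)
    have hKcl : IsClosed (mulE U '' (D ∩ closedBall 0 1)) := by
      have hcomp : IsCompact (D ∩ closedBall (0 : Euc n) 1) :=
        (isCompact_closedBall (0 : Euc n) 1).inter_left hDcl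
      rw [mulE_eq]
      exact (hcomp.image (Matrix.toEuclideanLin U).continuous_of_finiteDimensional).isClosed
    obtain ⟨f, u, hfu, huf⟩ := geometric_hahn_banach_closed_point hKconv hKcl hcon
    set v := (InnerProductSpace.toDual ℝ (Euc p)).symm f with hv
    have hfv : ∀ x, f x = ⟪v, x⟫_ℝ := fun x => (InnerProductSpace.toDual_symm_apply).symm
    have hvne : v ≠ 0 := by
      intro hv0
      have h0K : (0 : Euc p) ∈ mulE U '' (D ∩ closedBall 0 1) :=
        ⟨0, ⟨hD0, by simp⟩, mulE_zero U⟩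
    
      have e1 : f 0 < u := hfu 0 h0K
      have e2 : f (lam • mulE U y) = 0 := by rw [hfv, hv0, inner_zero_left]
      rw [map_zero] at e1
      rw [e2] at huf
      linarith
    have hvn : (0 : ℝ) < ‖v‖ := norm_pos_iff.2 hvne
    set z := ‖v‖⁻¹ • v with hz
    have hzs : z ∈ sphere (0 : Euc p) 1 := by
      simp [hz, mem_sphere_iff_norm, norm_smul, inv_mul_cancel₀ hvn.ne']
    have hzn : ‖z‖ = 1 := mem_sphere_zero_iff_norm.mp hzs
    have hvz : v = ‖v‖ • z := (smul_inv_smul₀ hvn.ne' v).symm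
    have hble : b ≤ ‖metricProj D (mulE U.transpose z)‖ :=
      csInf_le ⟨0, by rintro r ⟨x, -, rfl⟩; positivity⟩ ⟨z, hzs, rfl⟩
    obtain ⟨x₀, hx₀, hx₀eq⟩ :=
      metricProj_cone_exists ⟨hDcl, hDconv, hDcone, hD0⟩ (mulE U.transpose z)
    have hx₀K : mulE U x₀ ∈ mulE U '' (D ∩ closedBall 0 1) := ⟨x₀, hx₀, rfl⟩
    have hinner : ⟪z, mulE U x₀⟫_ℝ = ‖metricProj D (mulE U.transpose z)‖ := by
      rw [real_inner_comm, inner_mulE, real_inner_comm]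
      exact hx₀eq
    have hup : ⟪z, lam • mulE U y⟫_ℝ ≤ lam := by
      rw [real_inner_smul_right]
      calc lam * ⟪z, mulE U y⟫_ℝ ≤ lam * (‖z‖ * ‖mulE U y‖) :=
            mul_le_mul_of_nonneg_left (real_inner_le_norm z _) hlam0
        _ ≤ lam * 1 := by
            refine mul_le_mul_of_nonneg_left ?_ hlam0
            rw [hzn, one_mul]; exact hUy
        _ = lam := mul_one lam
    have hlow : lam ≤ ⟪z, mulE U x₀⟫_ℝ := by
      rw [hinner, hlamb]; exact hble
    have hfz : ∀ x, f x = ‖v‖ * ⟪z, x⟫_ℝ := fun x => by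
      rw [hfv x]
      nth_rewrite 1 [hvz]
      rw [real_inner_smul_left]
    have hfx₀ : f (mulE U x₀) = ‖v‖ * ⟪z, mulE U x₀⟫_ℝ := hfz _
    have hfw : f (lam • mulE U y) = ‖v‖ * ⟪z, lam • mulE U y⟫_ℝ := hfz _
    have hchain : f (lam • mulE U y) ≤ f (mulE U x₀) := by
      rw [hfx₀, hfw]
      exact mul_le_mul_of_nonneg_left (hup.trans hlow) hvn.le
    have := (hfu _ hx₀K).trans huf
    linarith

end
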